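/- arXiv:1606.08616 — 8 statements merged into one kernel-verified Lean document; each statement's English description precedes it below -/
import Mathlib

section
/- For every y > 0 there exists θ ∈ [-1, 1] such that ∫₀^y (sin t / t)² dt = π/2 - 1/(2y) + θ/(4y²). -/
/-!
Since `1 / t ^ 2 = ∫₀^∞ x e^{-xt} dx` for `t > 0`, Fubini turns `∫_y^∞ (sin t / t)² dt` into
`∫₀^∞ x (∫_y^∞ e^{-xt} sin² t dt) dx`, and the inner integral is elementary. The resulting
integrand is `e^{-xy} / 2` minus a remainder of size at most `x e^{-xy} / 4`; these integrate to
`1 / (2y)` and to at most `1 / (4y²)` respectively. At `y = 0` the integrand is `2 / (x² + 4)`,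
whose integral `π / 2` is the value of the whole integral.
-/

open Real MeasureTheory Set Filter Topology

lemma integrableOn_mul_exp_neg_mul {b : ℝ} (hb : 0 < b) :
    IntegrableOn (fun x : ℝ => x * exp (-(b * x))) (Ioi 0) := by
  simpa [rpow_one, neg_mul] using
    integrableOn_rpow_mul_exp_neg_mul_rpow (s := 1) (p := 1) (by norm_num) one_pos hb

lemma integral_mul_exp_neg_mul {b : ℝ} (hb : 0 < b) :
    ∫ x in Ioi (0 : ℝ), x * exp (-(b * x)) = 1 / b ^ 2 := by
  have h := integral_rpow_mul_exp_neg_mul_Ioi (a := 2) two_pos hb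
  norm_num [Gamma_two] at h
  simpa [rpow_one] using h

lemma integral_exp_neg_mul {b : ℝ} (hb : 0 < b) :
    ∫ x in Ioi (0 : ℝ), exp (-(b * x)) = 1 / b := by
  simpa [neg_mul, neg_div, div_neg] using integral_exp_mul_Ioi (neg_lt_zero.2 hb) 0

lemma integral_two_div_sq_add_four : ∫ x in Ioi (0 : ℝ), 2 / (x ^ 2 + 4) = π / 2 := by
  have h := integral_comp_mul_left_Ioi (fun x : ℝ => (1 + x ^ 2)⁻¹) 0 (one_half_pos (α := ℝ))
  simp only [mul_zero, integral_Ioi_inv_one_add_sq, arctan_zero, sub_zero, smul_eq_mul] at h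
  calc ∫ x in Ioi (0 : ℝ), 2 / (x ^ 2 + 4)
      = 1 / 2 * ∫ x in Ioi (0 : ℝ), (1 + (1 / 2 * x) ^ 2)⁻¹ := by
        rw [← integral_const_mul]
        congr 1 with x
        field_simp
        ring
    _ = π / 2 := by rw [h]; ring

-- Cauchy–Schwarz bounds the left side by `√(a² + 4)`, and `√u ≤ u / 2` for `u ≥ 4`.
lemma abs_mul_cos_sub_two_mul_sin_le (a θ : ℝ) :
    |a * cos θ - 2 * sin θ| ≤ (a ^ 2 + 4) / 2 := by
  have hsum : (a * cos θ - 2 * sin θ) ^ 2 + (a * sin θ + 2 * cos θ) ^ 2 = a ^ 2 + 4 := by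
    linear_combination (a ^ 2 + 4) * sin_sq_add_cos_sq θ
  refine abs_le_of_sq_le_sq' ?_ (by positivity) |> abs_le.2
  nlinarith [sq_nonneg (a * sin θ + 2 * cos θ), sq_nonneg a]

lemma sin_div_sq_le (t : ℝ) : (sin t / t) ^ 2 ≤ 2 * (1 + t ^ 2)⁻¹ := by
  rcases eq_or_ne t 0 with rfl | ht
  · simp
  rw [div_pow, div_le_iff₀ (by positivity), mul_comm, ← mul_assoc,
    le_mul_inv_iff₀ (by positivity)]
  nlinarith [sin_sq_le_one t, sin_sq_le_sq (x := t)]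

lemma integrable_sin_div_sq : Integrable fun t : ℝ => (sin t / t) ^ 2 := by
  refine (integrable_inv_one_add_sq.const_mul 2).mono'
    (by fun_prop : Measurable _).aestronglyMeasurable (.of_forall fun t => ?_)
  rw [norm_of_nonneg (sq_nonneg _)]
  exact sin_div_sq_le t

theorem integral_Ioi_div_sq_eq_integral_mul_laplace {f : ℝ → ℝ} (hf : Measurable f) {y : ℝ}
    (hy : 0 ≤ y) (hfi : IntegrableOn (fun t => f t / t ^ 2) (Ioi y)) :
    ∫ t in Ioi y, f t / t ^ 2 = ∫ x in Ioi 0, x * ∫ t in Ioi y, exp (-(x * t)) * f t := by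
  set K : ℝ → ℝ → ℝ := fun t x => x * exp (-(x * t)) * f t
  have hpos {t : ℝ} (ht : t ∈ Ioi y) : 0 < t := hy.trans_lt ht
  have hkernel {t : ℝ} (ht : t ∈ Ioi y) (c : ℝ) :
      ∫ x in Ioi 0, x * exp (-(x * t)) * c = c / t ^ 2 := by
    simp_rw [integral_mul_const, mul_comm _ t, integral_mul_exp_neg_mul (hpos ht)]
    ring
  have hint : Integrable (Function.uncurry K)
      ((volume.restrict (Ioi y)).prod (volume.restrict (Ioi 0))) := by
    refine (integrable_prod_iff (by fun_prop : Measurable _).aestronglyMeasurable).2 ⟨?_, ?_⟩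
    · filter_upwards [ae_restrict_mem measurableSet_Ioi] with t ht
      simpa only [Function.uncurry_apply_pair, K, mul_comm t] using
        (integrableOn_mul_exp_neg_mul (hpos ht)).mul_const (f t)
    · refine hfi.norm.congr ?_
      filter_upwards [ae_restrict_mem measurableSet_Ioi] with t ht
      rw [norm_div, norm_pow, norm_of_nonneg (hpos ht).le, ← hkernel ht]
      refine setIntegral_congr_fun measurableSet_Ioi fun x hx => ?_
      simp only [Function.uncurry_apply_pair, K, norm_mul, norm_of_nonneg hx.le,
        norm_of_nonneg (exp_pos _).le]
  calc ∫ t in Ioi y, f t / t ^ 2 = ∫ t in Ioi y, ∫ x in Ioi 0, K t x :=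
        (setIntegral_congr_fun measurableSet_Ioi fun t ht => hkernel ht (f t)).symm
    _ = ∫ x in Ioi 0, ∫ t in Ioi y, K t x := integral_integral_swap hint
    _ = ∫ x in Ioi 0, x * ∫ t in Ioi y, exp (-(x * t)) * f t := by
        simp only [K, mul_assoc, integral_const_mul]

lemma integral_exp_neg_mul_mul_sin_sq {b : ℝ} (hb : 0 < b) (y : ℝ) :
    ∫ t in Ioi y, exp (-(b * t)) * sin t ^ 2 =
      exp (-(b * y)) *
        (1 / (2 * b) - (b * cos (2 * y) - 2 * sin (2 * y)) / (2 * (b ^ 2 + 4))) := by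
  set G : ℝ → ℝ := fun t =>
    1 / (2 * b) - (b * cos (2 * t) - 2 * sin (2 * t)) / (2 * (b ^ 2 + 4))
  have hderiv (t : ℝ) :
      HasDerivAt (fun t => -(exp (-(b * t)) * G t)) (exp (-(b * t)) * sin t ^ 2) t := by
    have h2 : HasDerivAt (fun t : ℝ => 2 * t) 2 t := by
      simpa using (hasDerivAt_id t).const_mul 2
    have hG : HasDerivAt G
        (-((b * (-sin (2 * t) * 2) - 2 * (cos (2 * t) * 2)) / (2 * (b ^ 2 + 4)))) t :=
      (((h2.cos.const_mul b).sub (h2.sin.const_mul 2)).div_const _).const_sub _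
    have he : HasDerivAt (fun t => exp (-(b * t))) (exp (-(b * t)) * -b) t := by
      simpa using ((hasDerivAt_id t).const_mul b).neg.exp
    refine (he.mul hG).neg.congr_deriv ?_
    rw [sin_sq_eq_half_sub]
    simp only [G]
    field_simp
    ring
  have hint : IntegrableOn (fun t => exp (-(b * t)) * sin t ^ 2) (Ioi y) := by
    refine (exp_neg_integrableOn_Ioi y hb).mono' (by fun_prop) (.of_forall fun t => ?_)
    rw [norm_of_nonneg (by positivity), neg_mul]
    exact mul_le_of_le_one_right (exp_pos _).le (sin_sq_le_one t)
  have hG : IsBoundedUnder (· ≤ ·) atTop (fun t => ‖G t‖) := by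
    refine isBoundedUnder_of ⟨1 / (2 * b) + 1 / 4, fun t => ?_⟩
    have := abs_mul_cos_sub_two_mul_sin_le b (2 * t)
    simp only [G, norm_eq_abs]
    refine (abs_sub _ _).trans (add_le_add (abs_of_pos (by positivity)).le ?_)
    rw [abs_div, abs_of_pos (a := 2 * (b ^ 2 + 4)) (by positivity), div_le_iff₀ (by positivity)]
    linarith
  have hlim : Tendsto (fun t => -(exp (-(b * t)) * G t)) atTop (𝓝 0) := by
    have hexp : Tendsto (fun t => exp (-(b * t))) atTop (𝓝 0) :=
      tendsto_exp_atBot.comp (tendsto_neg_atTop_atBot.comp (tendsto_id.const_mul_atTop hb))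
    simpa using (hexp.zero_mul_isBoundedUnder_le hG).neg
  rw [integral_Ioi_of_hasDerivAt_of_tendsto' (fun t _ => hderiv t) hint hlim]
  simp [G]

noncomputable def sinSqRemainder (y x : ℝ) : ℝ :=
  exp (-(x * y)) * (x * (x * cos (2 * y) - 2 * sin (2 * y)) / (2 * (x ^ 2 + 4)))

lemma measurable_sinSqRemainder (y : ℝ) : Measurable (sinSqRemainder y) := by
  unfold sinSqRemainder
  fun_prop

lemma abs_sinSqRemainder_le {x : ℝ} (hx : 0 ≤ x) (y : ℝ) :
    |sinSqRemainder y x| ≤ 1 / 4 * (x * exp (-(y * x))) := by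
  have hD : (0 : ℝ) < 2 * (x ^ 2 + 4) := by positivity
  have hN : x * |x * cos (2 * y) - 2 * sin (2 * y)| ≤ x * ((x ^ 2 + 4) / 2) :=
    mul_le_mul_of_nonneg_left (abs_mul_cos_sub_two_mul_sin_le x (2 * y)) hx
  rw [sinSqRemainder, abs_mul, abs_exp, abs_div, abs_mul, abs_of_nonneg hx, abs_of_pos hD,
    mul_comm y x]
  calc exp (-(x * y)) * (x * |x * cos (2 * y) - 2 * sin (2 * y)| / (2 * (x ^ 2 + 4)))
      ≤ exp (-(x * y)) * (x * ((x ^ 2 + 4) / 2) / (2 * (x ^ 2 + 4))) := by gcongr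
    _ = 1 / 4 * (x * exp (-(x * y))) := by field_simp; ring

lemma integral_Ioi_sin_div_sq_eq {y : ℝ} (hy : 0 ≤ y) :
    ∫ t in Ioi y, (sin t / t) ^ 2 =
      ∫ x in Ioi 0, (exp (-(x * y)) / 2 - sinSqRemainder y x) := by
  simp_rw [div_pow]
  rw [integral_Ioi_div_sq_eq_integral_mul_laplace (by fun_prop) hy
    (integrable_sin_div_sq.integrableOn.congr_fun (fun t _ => div_pow _ _ _) measurableSet_Ioi)]
  refine setIntegral_congr_fun measurableSet_Ioi fun x hx => ?_
  rw [integral_exp_neg_mul_mul_sin_sq hx, sinSqRemainder]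
  have : (0 : ℝ) < x := hx
  field_simp

theorem integral_Ioi_sin_div_sq : ∫ t in Ioi (0 : ℝ), (sin t / t) ^ 2 = π / 2 := by
  rw [integral_Ioi_sin_div_sq_eq le_rfl, ← integral_two_div_sq_add_four]
  refine setIntegral_congr_fun measurableSet_Ioi fun x _ => ?_
  simp only [sinSqRemainder, mul_zero, neg_zero, exp_zero, cos_zero, sin_zero]
  field_simp
  ring

theorem abs_integral_Ioi_sin_div_sq_sub_le {y : ℝ} (hy : 0 < y) :
    |(∫ t in Ioi y, (sin t / t) ^ 2) - 1 / (2 * y)| ≤ 1 / (4 * y ^ 2) := by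
  have hbound : ∀ᵐ x ∂volume.restrict (Ioi 0),
      ‖sinSqRemainder y x‖ ≤ 1 / 4 * (x * exp (-(y * x))) :=
    (ae_restrict_mem measurableSet_Ioi).mono fun x hx => abs_sinSqRemainder_le (le_of_lt hx) y
  have hmajorant : IntegrableOn (fun x => 1 / 4 * (x * exp (-(y * x)))) (Ioi 0) :=
    (integrableOn_mul_exp_neg_mul hy).const_mul _
  have hremainder : IntegrableOn (sinSqRemainder y) (Ioi 0) :=
    hmajorant.mono' (measurable_sinSqRemainder y).aestronglyMeasurable hbound
  have hexp : IntegrableOn (fun x => exp (-(x * y)) / 2) (Ioi 0) := by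
    refine IntegrableOn.congr_fun ((exp_neg_integrableOn_Ioi 0 hy).div_const 2)
      (fun x _ => ?_) measurableSet_Ioi
    ring_nf
  have hhalf : ∫ x in Ioi (0 : ℝ), exp (-(x * y)) / 2 = 1 / (2 * y) := by
    simp_rw [integral_div, mul_comm _ y, integral_exp_neg_mul hy]
    ring
  rw [integral_Ioi_sin_div_sq_eq hy.le, integral_sub hexp hremainder, hhalf, sub_sub_cancel_left,
    abs_neg]
  calc |∫ x in Ioi 0, sinSqRemainder y x| ≤ ∫ x in Ioi 0, 1 / 4 * (x * exp (-(y * x))) :=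
        norm_integral_le_of_norm_le hmajorant hbound
    _ = 1 / (4 * y ^ 2) := by rw [integral_const_mul, integral_mul_exp_neg_mul hy]; ring

theorem tail_integral_sin_sq (y : ℝ) (hy : 0 < y) :
    ∃ θ : ℝ, θ ∈ Set.Icc (-1 : ℝ) 1 ∧
      ∫ t in (0:ℝ)..y, (Real.sin t / t) ^ 2 = π / 2 - 1 / (2 * y) + θ / (4 * y ^ 2) := by
  set T := ∫ t in Ioi y, (sin t / t) ^ 2
  refine ⟨4 * y ^ 2 * (1 / (2 * y) - T), ?_, ?_⟩
  · rw [mem_Icc, ← abs_le, abs_mul, abs_sub_comm, abs_of_pos (by positivity)]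
    calc 4 * y ^ 2 * |T - 1 / (2 * y)| ≤ 4 * y ^ 2 * (1 / (4 * y ^ 2)) := by
          gcongr; exact abs_integral_Ioi_sin_div_sq_sub_le hy
      _ = 1 := by field_simp
  · rw [← intervalIntegral.integral_Ioi_sub_Ioi integrable_sin_div_sq.integrableOn hy.le,
      integral_Ioi_sin_div_sq, mul_div_cancel_left₀ _ (by positivity)]
    ring
end

section
/- For all real x ≥ 6, the inequality (x² - 6)·|sin x - (2/x)·cos x| < x² - 24/x holds. -/
theorem osc_bound (x : ℝ) (hx : 6 ≤ x) :
    (x ^ 2 - 6) * |Real.sin x - (2 / x) * Real.cos x| < x ^ 2 - 24 / x := by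
  have hx0 : (0:ℝ) < x := by linarith
  have hs := Real.sin_sq_add_cos_sq x
  set s := Real.sin x with hsdef
  set c := Real.cos x with hcdef
  have hA2 : (s - (2/x)*c)^2 ≤ 1 + 4/x^2 := by
    have h1 : (0:ℝ) ≤ (c + (2/x)*s)^2 := sq_nonneg _
    have h2 : (s - (2/x)*c)^2 + (c + (2/x)*s)^2 = 1 + 4/x^2 := by
      field_simp
      nlinarith [hs]
    linarith
  have hpos : 0 < x^2 - 24/x := by
    have h24 : 24/x ≤ 4 := by rw [div_le_iff₀ hx0]; linarith
    nlinarith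
  have h6 : 0 ≤ x^2 - 6 := by nlinarith
  refine lt_of_pow_lt_pow_left₀ 2 hpos.le ?_
  have habs : ((x^2-6) * |s - (2/x)*c|)^2 = (x^2-6)^2 * (s - (2/x)*c)^2 := by
    rw [mul_pow, sq_abs]
  rw [habs]
  have key : (x^2-6)^2 * (1 + 4/x^2) < (x^2 - 24/x)^2 := by
    rw [← sub_pos]
    have hx2 : (0:ℝ) < x^2 := by positivity
    rw [show (x^2 - 24/x)^2 - (x^2-6)^2 * (1 + 4/x^2)
        = ((x^2*x^2 - 24*x)^2 - (x^2-6)^2 * (x^2 + 4) * x^2) / (x^2*x^2) by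
      field_simp]
    apply div_pos _ (by positivity)
    nlinarith [sq_nonneg x, sq_nonneg (x-6), mul_pos hx0 hx0]
  calc (x^2-6)^2 * (s - (2/x)*c)^2 ≤ (x^2-6)^2 * (1 + 4/x^2) :=
        mul_le_mul_of_nonneg_left hA2 (sq_nonneg _)
    _ < (x^2 - 24/x)^2 := key
end

section
/- For all reals x and h with 0 ≤ h ≤ x, one has (x+h)^(3/2) + 2·x^(3/2) + (x-h)^(3/2) ≤ 4·x^(3/2) + h²/√x. -/
lemma rpow_three_halves (t : ℝ) (ht : 0 ≤ t) :
    t ^ ((3 : ℝ) / 2) = Real.sqrt t ^ 3 := by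
  rw [Real.sqrt_eq_rpow, ← Real.rpow_natCast (t ^ ((1:ℝ)/2)) 3, ← Real.rpow_mul ht]
  norm_num

theorem rpow_second_diff_bound (x h : ℝ) (hx : 0 < x) (hh : 0 ≤ h) (hhx : h ≤ x) :
    (x + h) ^ ((3 : ℝ) / 2) + 2 * x ^ ((3 : ℝ) / 2) + (x - h) ^ ((3 : ℝ) / 2)
      ≤ 4 * x ^ ((3 : ℝ) / 2) + h ^ 2 / Real.sqrt x := by
  have h1 : (0:ℝ) ≤ x + h := by linarith
  have h2 : (0:ℝ) ≤ x - h := by linarith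
  rw [rpow_three_halves _ h1, rpow_three_halves _ h2, rpow_three_halves _ hx.le]
  set a := Real.sqrt (x + h) with ha
  set b := Real.sqrt (x - h) with hb
  set c := Real.sqrt x with hc
  have ha0 : 0 ≤ a := Real.sqrt_nonneg _
  have hb0 : 0 ≤ b := Real.sqrt_nonneg _
  have hc0 : 0 < c := Real.sqrt_pos.mpr hx
  have ha2 : a ^ 2 = x + h := Real.sq_sqrt h1
  have hb2 : b ^ 2 = x - h := Real.sq_sqrt h2
  have hc2 : c ^ 2 = x := Real.sq_sqrt hx.le
  have hh' : h = (a ^ 2 - b ^ 2) / 2 := by rw [ha2, hb2]; ring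
  have hcc : c ^ 2 = (a ^ 2 + b ^ 2) / 2 := by rw [ha2, hb2, hc2]; ring
  have hP : 0 ≤ a^6 + 2*a^5*b + 7*a^4*b^2 - 4*a^3*b^3 + 7*a^2*b^4 + 2*a*b^5 + b^6 := by
    nlinarith [mul_nonneg (sq_nonneg (a*b)) (sq_nonneg (a-b)), pow_nonneg ha0 6,
      pow_nonneg hb0 6, mul_nonneg (pow_nonneg ha0 5) hb0, mul_nonneg ha0 (pow_nonneg hb0 5),
      mul_nonneg (mul_nonneg (sq_nonneg a) (sq_nonneg b)) (mul_nonneg ha0 hb0)]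
  have h_id : 16 * ((2 * c ^ 4 + h ^ 2) ^ 2 - (c * (a ^ 3 + b ^ 3)) ^ 2)
      = (a - b)^2 * (a^6 + 2*a^5*b + 7*a^4*b^2 - 4*a^3*b^3 + 7*a^2*b^4 + 2*a*b^5 + b^6) := by
    have e1 : (c * (a ^ 3 + b ^ 3)) ^ 2 = ((a ^ 2 + b ^ 2) / 2) * (a ^ 3 + b ^ 3) ^ 2 := by
      rw [← hcc]; ring
    have e2 : (2 * c ^ 4 + h ^ 2) ^ 2
        = (2 * ((a ^ 2 + b ^ 2) / 2) ^ 2 + ((a ^ 2 - b ^ 2) / 2) ^ 2) ^ 2 := by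
      rw [← hh', show c ^ 4 = (c ^ 2) ^ 2 by ring, hcc]
    rw [e1, e2]; ring
  have hsq : (c * (a ^ 3 + b ^ 3)) ^ 2 ≤ (2 * c ^ 4 + h ^ 2) ^ 2 := by
    nlinarith [mul_nonneg (sq_nonneg (a - b)) hP, h_id]
  have key : c * (a ^ 3 + b ^ 3) ≤ 2 * c ^ 4 + h ^ 2 := by
    have hr : (0:ℝ) ≤ 2 * c ^ 4 + h ^ 2 := by positivity
    nlinarith [hsq, hr]
  have hkey2 : a ^ 3 + b ^ 3 - 2 * c ^ 3 ≤ h ^ 2 / c := by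
    rw [le_div_iff₀ hc0]; nlinarith [key]
  linarith [hkey2]
end

section
/- For all reals x ≥ 100 and h with 0 < h ≤ (5/6)·x, the inequality |log(x+h) - 2·log x + log(x-h)| ≤ 12·h²/x² holds. -/
/-! The second difference of `log` at `x` with step `h` is `log (1 - (h / x) ^ 2)`, and
`|log (1 - t)| ≤ t / (1 - t)`. For `h ≤ 5x/6` we have `t = (h / x) ^ 2 ≤ 25/36`, so the factor
`1 / (1 - t)` is at most `36/11 ≤ 12`. -/

namespace Real

theorem log_add_sub_two_mul_log_add_log_sub {x h : ℝ} (hx : 0 < x) (hhx : |h| < x) :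
    log (x + h) - 2 * log x + log (x - h) = log (1 - (h / x) ^ 2) := by
  obtain ⟨hneg, hpos⟩ := abs_lt.mp hhx
  have hfactor : 1 - (h / x) ^ 2 = (x + h) * (x - h) / x ^ 2 := by
    field_simp
    ring
  rw [hfactor, log_div (by nlinarith) (by positivity), log_mul (by linarith) (by linarith),
    log_pow]
  push_cast
  ring

theorem abs_log_one_sub_le {t : ℝ} (ht₀ : 0 ≤ t) (ht₁ : t < 1) :
    |log (1 - t)| ≤ t / (1 - t) := by
  have hpos : 0 < 1 - t := by linarith
  rw [abs_of_nonpos (log_nonpos hpos.le (by linarith)), neg_le]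
  calc -(t / (1 - t)) = 1 - (1 - t)⁻¹ := by field_simp; ring
    _ ≤ log (1 - t) := one_sub_inv_le_log_of_pos hpos

end Real

theorem log_second_diff_bound_general (x h : ℝ) (hh : 0 < h) (hhx : h ≤ 5 / 6 * x) :
    |Real.log (x + h) - 2 * Real.log x + Real.log (x - h)| ≤ 12 * h ^ 2 / x ^ 2 := by
  have hx : 0 < x := by linarith
  set t := (h / x) ^ 2 with ht
  have ht₀ : 0 ≤ t := by positivity
  have ht₁ : t ≤ 25 / 36 := by
    have hratio : h / x ≤ 5 / 6 := by rw [div_le_iff₀ hx]; linarith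
    have : 0 ≤ h / x := by positivity
    nlinarith
  rw [Real.log_add_sub_two_mul_log_add_log_sub hx (by rw [abs_of_pos hh]; linarith)]
  calc |Real.log (1 - t)| ≤ t / (1 - t) := Real.abs_log_one_sub_le ht₀ (by linarith)
    _ ≤ 12 * t := by rw [div_le_iff₀ (by linarith)]; nlinarith
    _ = 12 * h ^ 2 / x ^ 2 := by rw [ht, div_pow, mul_div_assoc]

theorem log_second_diff_bound (x h : ℝ) (hx : 100 ≤ x) (hh : 0 < h) (hhx : h ≤ 5 / 6 * x) :
    |Real.log (x + h) - 2 * Real.log x + Real.log (x - h)| ≤ 12 * h ^ 2 / x ^ 2 :=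
  log_second_diff_bound_general x h hh hhx
end

section
/- For all reals x and h with 0 < h ≤ (5/6)·x, one has |(x+h)·log(x+h) - 2·x·log x + (x-h)·log(x-h)| ≤ x·h²/(x² - h²) ≤ 3.4·h²/x. -/
/-!
Write `Δ(h)` for the second difference of `t log t` at `x`. Then `Δ(0) = 0` and
`Δ'(h) = log (x + h) - log (x - h)`, which is nonnegative. It is also at most
`2xh / (x² - h²)`, because `log s ≤ sinh (log s) = (s - s⁻¹) / 2` for `s ≥ 1`, and this is at most
the derivative `2x³h / (x² - h²)²` of `x h² / (x² - h²)`. Integrating from `0` gives both bounds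
on `Δ(h)`. The bound by `3.4 h² / x` only uses `h² ≤ (25/36) x² < (12/17) x²`.
-/

open Real Set

def secondDiff (f : ℝ → ℝ) (x h : ℝ) : ℝ :=
  f (x + h) - 2 * f x + f (x - h)

lemma secondDiff_zero (f : ℝ → ℝ) (x : ℝ) : secondDiff f x 0 = 0 := by
  simp only [secondDiff, add_zero, sub_zero]; ring

lemma hasDerivAt_secondDiff {f : ℝ → ℝ} {a b x h : ℝ} (ha : HasDerivAt f a (x + h))
    (hb : HasDerivAt f b (x - h)) : HasDerivAt (secondDiff f x) (a - b) h := by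
  have hp := ha.comp_const_add x h
  have hm := hb.comp_const_sub x h
  exact ((hp.sub_const (2 * f x)).add hm).congr_deriv (sub_eq_add_neg a b).symm

lemma hasDerivAt_secondDiff_mul_log {x h : ℝ} (hh : |h| < x) :
    HasDerivAt (secondDiff (fun t ↦ t * log t) x) (log (x + h) - log (x - h)) h := by
  have hp : x + h ≠ 0 := by linarith [neg_abs_le h]
  have hm : x - h ≠ 0 := by linarith [le_abs_self h]
  simpa using hasDerivAt_secondDiff (hasDerivAt_mul_log hp) (hasDerivAt_mul_log hm)

lemma log_le_sub_inv_div_two {t : ℝ} (ht : 1 ≤ t) : log t ≤ (t - t⁻¹) / 2 := by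
  rw [← sinh_log (by linarith)]
  exact self_le_sinh_iff.mpr (log_nonneg ht)

lemma log_add_sub_log_sub_le {x t : ℝ} (ht : 0 ≤ t) (htx : t < x) :
    log (x + t) - log (x - t) ≤ 2 * x * t / (x ^ 2 - t ^ 2) := by
  have hm : 0 < x - t := by linarith
  have hp : 0 < x + t := by linarith
  have hsq : x ^ 2 - t ^ 2 ≠ 0 := by nlinarith
  rw [← log_div hp.ne' hm.ne']
  calc log ((x + t) / (x - t)) ≤ ((x + t) / (x - t) - ((x + t) / (x - t))⁻¹) / 2 :=
        log_le_sub_inv_div_two ((one_le_div hm).mpr (by linarith))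
    _ = 2 * x * t / (x ^ 2 - t ^ 2) := by field_simp; ring

lemma hasDerivAt_mul_sq_div_sq_sub_sq {x t : ℝ} (ht : t ^ 2 ≠ x ^ 2) :
    HasDerivAt (fun s ↦ x * s ^ 2 / (x ^ 2 - s ^ 2)) (2 * x ^ 3 * t / (x ^ 2 - t ^ 2) ^ 2) t := by
  have hne : x ^ 2 - t ^ 2 ≠ 0 := sub_ne_zero.mpr (Ne.symm ht)
  refine (((hasDerivAt_pow 2 t).const_mul x).div
    ((hasDerivAt_pow 2 t).const_sub (x ^ 2)) hne).congr_deriv ?_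
  push_cast
  field_simp
  ring

lemma le_of_hasDerivAt_le {f f' g g' : ℝ → ℝ} {a b : ℝ} (hab : a ≤ b)
    (hf : ∀ t ∈ Icc a b, HasDerivAt f (f' t) t) (hg : ∀ t ∈ Icc a b, HasDerivAt g (g' t) t)
    (ha : f a ≤ g a) (hderiv : ∀ t ∈ Ico a b, f' t ≤ g' t) : f b ≤ g b :=
  image_le_of_deriv_right_le_deriv_boundary
    (fun t ht ↦ (hf t ht).continuousAt.continuousWithinAt)
    (fun t ht ↦ (hf t (Ico_subset_Icc_self ht)).hasDerivWithinAt) ha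
    (fun t ht ↦ (hg t ht).continuousAt.continuousWithinAt)
    (fun t ht ↦ (hg t (Ico_subset_Icc_self ht)).hasDerivWithinAt) hderiv ⟨hab, le_rfl⟩

lemma secondDiff_mul_log_nonneg {x h : ℝ} (hh : 0 ≤ h) (hhx : h < x) :
    0 ≤ secondDiff (fun t ↦ t * log t) x h := by
  refine le_of_hasDerivAt_le hh (fun t _ ↦ hasDerivAt_const t 0)
    (fun t ht ↦ hasDerivAt_secondDiff_mul_log ?_) (secondDiff_zero _ x).ge fun t ht ↦ ?_
  · rw [abs_of_nonneg ht.1]; linarith [ht.2]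
  · exact sub_nonneg.mpr (log_le_log (by linarith [ht.2]) (by linarith [ht.1]))

lemma secondDiff_mul_log_le {x h : ℝ} (hh : 0 ≤ h) (hhx : h < x) :
    secondDiff (fun t ↦ t * log t) x h ≤ x * h ^ 2 / (x ^ 2 - h ^ 2) := by
  refine le_of_hasDerivAt_le (g := fun s ↦ x * s ^ 2 / (x ^ 2 - s ^ 2)) hh
    (fun t ht ↦ hasDerivAt_secondDiff_mul_log ?_) (fun t ht ↦ hasDerivAt_mul_sq_div_sq_sub_sq ?_)
    (by simp [secondDiff_zero]) fun t ht ↦ ?_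
  · rw [abs_of_nonneg ht.1]; linarith [ht.2]
  · nlinarith [ht.1, ht.2]
  · have hd : 0 < x ^ 2 - t ^ 2 := by nlinarith [ht.1, ht.2]
    calc log (x + t) - log (x - t) ≤ 2 * x * t / (x ^ 2 - t ^ 2) :=
          log_add_sub_log_sub_le ht.1 (by linarith [ht.2])
      _ ≤ 2 * x ^ 3 * t / (x ^ 2 - t ^ 2) ^ 2 := by
          rw [div_le_div_iff₀ hd (pow_pos hd 2)]
          nlinarith [mul_nonneg (mul_nonneg (mul_nonneg (hh.trans_lt hhx).le ht.1) hd.le)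
            (sq_nonneg t)]

theorem xlogx_second_diff_bound_general (x h : ℝ) (hh : 0 < h) (hhx : h ≤ 5 / 6 * x) :
    |(x + h) * Real.log (x + h) - 2 * (x * Real.log x) + (x - h) * Real.log (x - h)|
        ≤ x * h ^ 2 / (x ^ 2 - h ^ 2) ∧
      x * h ^ 2 / (x ^ 2 - h ^ 2) ≤ 3.4 * h ^ 2 / x := by
  have hx : 0 < x := by linarith
  have hhx' : h < x := by linarith
  refine ⟨?_, ?_⟩
  · change |secondDiff (fun t ↦ t * log t) x h| ≤ _
    rw [abs_of_nonneg (secondDiff_mul_log_nonneg hh.le hhx')]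
    exact secondDiff_mul_log_le hh.le hhx'
  · have hsq : h ^ 2 ≤ 25 / 36 * x ^ 2 := by nlinarith
    rw [div_le_div_iff₀ (by nlinarith) hx]
    nlinarith [mul_le_mul_of_nonneg_left hsq (sq_nonneg h)]

theorem xlogx_second_diff_bound (x h : ℝ) (hx : 0 < x) (hh : 0 < h) (hhx : h ≤ 5 / 6 * x) :
    |(x + h) * Real.log (x + h) - 2 * (x * Real.log x) + (x - h) * Real.log (x - h)|
        ≤ x * h ^ 2 / (x ^ 2 - h ^ 2) ∧
      x * h ^ 2 / (x ^ 2 - h ^ 2) ≤ 3.4 * h ^ 2 / x :=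
  xlogx_second_diff_bound_general x h hh hhx
end

section
/- For all real v ≠ 0, |sin(2v)/2 - sin²(v)/v| ≤ 4/5. -/
/-!
Put `t = 2v`; since `sin v ^ 2 = (1 - cos t) / 2`, the quantity is `sin t / 2 - (1 - cos t) / t`,
which is odd in `t`, so let `t > 0`. It is at most `1 / 2` because `1 - cos t ≥ 0`; the other side
is `1 - cos t - t sin t / 2 ≤ 4t/5`. On `[0, π]` the term `t sin t` is nonnegative and
`1 - cos t ≤ 4t/5` follows from the degree six Taylor bound for `cos`. For `t ≥ 160/39`,
Cauchy–Schwarz gives `|2 cos t + t sin t| ≤ √(4 + t²) ≤ 8t/5 - 2`. On `[π, 160/39]` the bound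
is nearly attained (the maximum is about `0.7933`, near `t = 4.09`); there `t = π + r` with
`r ∈ [0, 1]`, and the quartic and quintic Taylor bounds for `cos r` and `sin r` together with
`π > 3.14` suffice.
-/

open Real Set

lemma le_of_hasDerivAt_le_s9 {f g f' g' : ℝ → ℝ} (hf : ∀ x, HasDerivAt f (f' x) x)
    (hg : ∀ x, HasDerivAt g (g' x) x) (h₀ : f 0 ≤ g 0) (h' : ∀ x, 0 < x → f' x ≤ g' x)
    {x : ℝ} (hx : 0 ≤ x) : f x ≤ g x := by
  have hmono : MonotoneOn (g - f) (Ici 0) := by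
    refine monotoneOn_of_hasDerivWithinAt_nonneg (f' := g' - f') (convex_Ici 0)
      (fun y _ ↦ ((hg y).sub (hf y)).continuousAt.continuousWithinAt)
      (fun y _ ↦ ((hg y).sub (hf y)).hasDerivWithinAt) fun y hy ↦ ?_
    rw [interior_Ici] at hy
    exact sub_nonneg.2 (h' y hy)
  have h := hmono self_mem_Ici hx hx
  simp only [Pi.sub_apply] at h
  linarith

namespace Real

theorem cos_le_taylor_four {x : ℝ} (hx : 0 ≤ x) : cos x ≤ 1 - x ^ 2 / 2 + x ^ 4 / 24 := by
  refine le_of_hasDerivAt_le_s9 (g := fun x ↦ 1 - x ^ 2 / 2 + x ^ 4 / 24) (f' := fun x ↦ -sin x)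
    (g' := fun x ↦ -(x - x ^ 3 / 6)) hasDerivAt_cos (fun y ↦ ?_) (by simp)
    (fun y hy ↦ neg_le_neg (sin_ge_sub_cube hy.le)) hx
  exact ((((hasDerivAt_pow 2 y).div_const 2).const_sub 1).add
    ((hasDerivAt_pow 4 y).div_const 24)).congr_deriv (by push_cast; ring)

theorem sin_le_taylor_five {x : ℝ} (hx : 0 ≤ x) : sin x ≤ x - x ^ 3 / 6 + x ^ 5 / 120 := by
  refine le_of_hasDerivAt_le_s9 (g := fun x ↦ x - x ^ 3 / 6 + x ^ 5 / 120) (f' := cos)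
    (g' := fun x ↦ 1 - x ^ 2 / 2 + x ^ 4 / 24) hasDerivAt_sin (fun y ↦ ?_) (by simp)
    (fun y hy ↦ cos_le_taylor_four hy.le) hx
  exact (((hasDerivAt_id' y).sub ((hasDerivAt_pow 3 y).div_const 6)).add
    ((hasDerivAt_pow 5 y).div_const 120)).congr_deriv (by push_cast; ring)

theorem taylor_six_le_cos {x : ℝ} (hx : 0 ≤ x) :
    1 - x ^ 2 / 2 + x ^ 4 / 24 - x ^ 6 / 720 ≤ cos x := by
  refine le_of_hasDerivAt_le_s9 (f := fun x ↦ 1 - x ^ 2 / 2 + x ^ 4 / 24 - x ^ 6 / 720)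
    (f' := fun x ↦ -(x - x ^ 3 / 6 + x ^ 5 / 120)) (g' := fun x ↦ -sin x) (fun y ↦ ?_)
    hasDerivAt_cos (by simp) (fun y hy ↦ neg_le_neg (sin_le_taylor_five hy.le)) hx
  exact (((((hasDerivAt_pow 2 y).div_const 2).const_sub 1).add
    ((hasDerivAt_pow 4 y).div_const 24)).sub
    ((hasDerivAt_pow 6 y).div_const 720)).congr_deriv (by push_cast; ring)

theorem one_sub_cos_le {t : ℝ} (ht : 0 ≤ t) : 1 - cos t ≤ 4 / 5 * t := by
  rcases le_total t (5 / 2) with ht' | ht'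
  · nlinarith [taylor_six_le_cos ht, mul_nonneg ht (sub_nonneg.2 ht'), pow_nonneg ht 3,
      pow_nonneg ht 4, pow_nonneg ht 5]
  · linarith [neg_one_le_cos t]

theorem one_sub_cos_sub_mul_sin_div_two_le_of_le_pi {t : ℝ} (ht₀ : 0 ≤ t) (ht : t ≤ π) :
    1 - cos t - t * sin t / 2 ≤ 4 / 5 * t := by
  nlinarith [one_sub_cos_le ht₀, mul_nonneg ht₀ (sin_nonneg_of_nonneg_of_le_pi ht₀ ht)]

theorem one_sub_cos_sub_mul_sin_div_two_le_of_mem_Icc {t : ℝ} (ht : t ∈ Icc π (160 / 39)) :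
    1 - cos t - t * sin t / 2 ≤ 4 / 5 * t := by
  obtain ⟨r, hr, rfl⟩ : ∃ r, 0 ≤ r ∧ r + π = t := ⟨t - π, by linarith [ht.1], by ring⟩
  have hr₁ : r ≤ 1 := by linarith [ht.2, pi_gt_d2]
  rw [cos_add_pi, sin_add_pi]
  have hsin :=
    mul_le_mul_of_nonneg_left (sin_le_taylor_five hr) (by linarith [pi_pos] : 0 ≤ r + π)
  have hsin_le : r - r ^ 3 / 6 + r ^ 5 / 120 ≤ 8 / 5 := by
    nlinarith [pow_nonneg hr 5, pow_le_one₀ hr hr₁ (n := 5)]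
  have hπ := mul_le_mul_of_nonneg_right pi_gt_d2.le (sub_nonneg.2 hsin_le)
  have hpoly :
      4 - r ^ 2 + r ^ 4 / 12 + (3.14 + r) * (r - r ^ 3 / 6 + r ^ 5 / 120 - 8 / 5) ≤ 0 := by
    have h₁ := sub_nonneg.2 hr₁
    nlinarith [mul_nonneg hr h₁, mul_nonneg (pow_nonneg hr 2) h₁,
      mul_nonneg (pow_nonneg hr 3) h₁, mul_nonneg (pow_nonneg hr 4) h₁,
      mul_nonneg (pow_nonneg hr 5) h₁, sq_nonneg (r - 19 / 20),
      mul_nonneg hr (sq_nonneg (r - 19 / 20))]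
  nlinarith [cos_le_taylor_four hr]

theorem one_sub_cos_sub_mul_sin_div_two_le_of_ge {t : ℝ} (ht : 160 / 39 ≤ t) :
    1 - cos t - t * sin t / 2 ≤ 4 / 5 * t := by
  -- `(2 cos t + t sin t)² + (2 sin t - t cos t)² = 4 + t²`, and `4 + t² ≤ (8t/5 - 2)²` here
  have hcs : (2 * cos t + t * sin t) ^ 2 ≤ (8 / 5 * t - 2) ^ 2 := by
    nlinarith [sq_nonneg (2 * sin t - t * cos t), sin_sq_add_cos_sq t]
  linarith [(abs_le_of_sq_le_sq' hcs (by linarith)).1]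

theorem one_sub_cos_sub_mul_sin_div_two_le {t : ℝ} (ht : 0 ≤ t) :
    1 - cos t - t * sin t / 2 ≤ 4 / 5 * t := by
  rcases le_total t π with htπ | hπt
  · exact one_sub_cos_sub_mul_sin_div_two_le_of_le_pi ht htπ
  rcases le_total t (160 / 39) with ht' | ht'
  · exact one_sub_cos_sub_mul_sin_div_two_le_of_mem_Icc ⟨hπt, ht'⟩
  · exact one_sub_cos_sub_mul_sin_div_two_le_of_ge ht'

theorem abs_sin_div_two_sub_one_sub_cos_div_le_of_pos {t : ℝ} (ht : 0 < t) :
    |sin t / 2 - (1 - cos t) / t| ≤ 4 / 5 := by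
  have hlower : (1 - cos t) / t - sin t / 2 ≤ 4 / 5 := by
    rw [div_sub' ht.ne', div_le_iff₀ ht]
    linarith [one_sub_cos_sub_mul_sin_div_two_le ht.le]
  have hupper : sin t / 2 - (1 - cos t) / t ≤ 1 / 2 := by
    have := div_nonneg (sub_nonneg.2 (cos_le_one t)) ht.le
    linarith [sin_le_one t]
  rw [abs_le]
  constructor <;> linarith

theorem abs_sin_div_two_sub_one_sub_cos_div_le {t : ℝ} (ht : t ≠ 0) :
    |sin t / 2 - (1 - cos t) / t| ≤ 4 / 5 := by
  rcases ht.lt_or_gt with hneg | hpos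
  · have h := abs_sin_div_two_sub_one_sub_cos_div_le_of_pos (neg_pos.2 hneg)
    rw [sin_neg, cos_neg] at h
    rw [← abs_neg]
    convert h using 2
    ring
  · exact abs_sin_div_two_sub_one_sub_cos_div_le_of_pos hpos

end Real

theorem sin_combination_bound (v : ℝ) (hv : v ≠ 0) :
    |Real.sin (2 * v) / 2 - Real.sin v ^ 2 / v| ≤ 4 / 5 := by
  convert Real.abs_sin_div_two_sub_one_sub_cos_div_le (mul_ne_zero two_ne_zero hv) using 3
  rw [Real.sin_sq_eq_half_sub]
  ring
end

section
/- Let x ≥ 121 and 0 < h ≤ (5/6)x be reals. Assume ψ(t) - θ(t) ≤ (1 + 10⁻⁶)√t + 3·t^(1/3) for all t ≥ 0 and ψ(t) - θ(t) ≥ 0.998684·√t for all t ≥ 121, where ψ and θ are the Chebyshev functions. Then [ψ(x+h) - θ(x+h)] - [ψ(x-h) - θ(x-h)] ≤ 0.95·√x + 3.7·x^(1/3). -/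
/-- Chebyshev `ψ(t) = Σ_{n ≤ t} Λ(n)`. -/
noncomputable def chebyshevPsi (t : ℝ) : ℝ :=
  ∑ n ∈ Finset.Icc 1 ⌊t⌋₊, ArithmeticFunction.vonMangoldt n

/-- Chebyshev `θ(t) = Σ_{p ≤ t} log p`. -/
noncomputable def chebyshevTheta (t : ℝ) : ℝ :=
  ∑ p ∈ (Finset.Icc 1 ⌊t⌋₊).filter Nat.Prime, Real.log p

/-! Since `x + h ≤ 11x/6` and `ψ - θ` is nondecreasing, the difference is at most
`(ψ - θ)(11x/6) - (ψ - θ)(x - h)`. If `x - h ≥ 121`, the two assumed bounds apply at `11x/6` and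
at `x - h ≥ x/6`, and what remains is a numerical inequality between multiples of `√x` and
`x^(1/3)`. Otherwise `x < 726`; dropping the subtracted term, which is nonnegative, it suffices to
know `(ψ - θ)(N) = log ∏_{p ≤ √N} p^(⌊log_p N⌋ - 1)` exactly for `N = 513, 958, 1330`, one value
for each of three ranges of `x`. -/

open Real Finset Nat Chebyshev

theorem le_rpow_one_third {c x : ℝ} (hc : 0 ≤ c) (h : c ^ 3 ≤ x) : c ≤ x ^ (1 / 3 : ℝ) := by
  rw [one_div, Real.le_rpow_inv_iff_of_pos hc ((pow_nonneg hc 3).trans h) three_pos]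
  exact_mod_cast h

theorem rpow_one_third_le {c x : ℝ} (hc : 0 ≤ c) (hx : 0 ≤ x) (h : x ≤ c ^ 3) :
    x ^ (1 / 3 : ℝ) ≤ c := by
  rw [one_div, Real.rpow_inv_le_iff_of_pos hx hc three_pos]
  exact_mod_cast h

theorem log_natCast_le_of_le_pow {A K : ℕ} (h : (A : ℝ) ≤ 2.718 ^ K) : Real.log A ≤ K := by
  rcases A.eq_zero_or_pos with rfl | hA
  · simp
  rw [Real.log_le_iff_le_exp (by exact_mod_cast hA), ← Real.exp_one_pow]
  exact h.trans (pow_le_pow_left₀ (by norm_num) (by linarith [Real.exp_one_gt_d9]) K)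

theorem Nat.prod_primesLE_pow_log_sub_one_eq_of_lt_sq {m n : ℕ} (hmn : m ≤ n) (hnm : n < (m + 1) ^ 2) :
    ∏ p ∈ primesLE n, p ^ (Nat.log p n - 1) = ∏ p ∈ primesLE m, p ^ (Nat.log p n - 1) := by
  refine (prod_subset (primesLE_mono hmn) fun p hpn hpm ↦ ?_).symm
  have hmp : m < p := by
    by_contra! h
    exact hpm (mem_primesLE.mpr ⟨h, prime_of_mem_primesLE hpn⟩)
  have hn : n ≠ 0 := Nat.ne_zero_of_lt (one_lt_of_mem_primesLE hpn |>.trans_le (le_of_mem_primesLE hpn))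
  have : Nat.log p n < 2 := Nat.log_lt_of_lt_pow hn (hnm.trans_le (Nat.pow_le_pow_left hmp 2))
  rw [Nat.sub_eq_zero_of_le (by omega), pow_zero]

namespace Chebyshev

theorem psi_sub_theta_le_of_floor_le {s t : ℝ} (h : ⌊s⌋₊ ≤ ⌊t⌋₊) : ψ s - θ s ≤ ψ t - θ t := by
  simp only [psi_sub_theta_eq_sum_not_prime]
  exact sum_le_sum_of_subset_of_nonneg (filter_subset_filter _ (Ioc_subset_Ioc_right h))
    fun _ _ _ ↦ ArithmeticFunction.vonMangoldt_nonneg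

theorem psi_sub_theta_mono : Monotone fun t ↦ ψ t - θ t :=
  fun _ _ h ↦ psi_sub_theta_le_of_floor_le (Nat.floor_le_floor h)

theorem psi_sub_theta_natCast (n : ℕ) :
    ψ n - θ n = Real.log (∏ p ∈ primesLE n, p ^ (Nat.log p n - 1) : ℕ) := by
  rw [psi_eq_sum_mul_log_prime, theta_eq_sum_primesLE_log, ← sum_sub_distrib, Nat.cast_prod,
    Real.log_prod fun p hp ↦ by simp [(prime_of_mem_primesLE hp).ne_zero]]
  refine sum_congr rfl fun p hp ↦ ?_
  have : 1 ≤ Nat.log p n :=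
    Nat.log_pos (one_lt_of_mem_primesLE hp) (le_of_mem_primesLE hp)
  rw [Nat.cast_pow, Real.log_pow, Nat.cast_sub this]
  push_cast
  ring

theorem psi_sub_theta_le_of_prod_eq {t : ℝ} {m N A K : ℕ} (ht : t < N + 1)
    (hmN : m ≤ N) (hNm : N < (m + 1) ^ 2) (hA : ∏ p ∈ primesLE m, p ^ (Nat.log p N - 1) = A)
    (hK : (A : ℝ) ≤ 2.718 ^ K) : ψ t - θ t ≤ K := calc
  ψ t - θ t ≤ ψ N - θ N := psi_sub_theta_le_of_floor_le <| by
    rw [Nat.floor_natCast]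
    exact Nat.le_of_lt_succ ((Nat.floor_lt' N.succ_ne_zero).mpr (by exact_mod_cast ht))
  _ = Real.log A := by rw [psi_sub_theta_natCast, prod_primesLE_pow_log_sub_one_eq_of_lt_sq hmN hNm, hA]
  _ ≤ K := log_natCast_le_of_le_pow hK

theorem psi_sub_theta_eleven_sixths_le {x : ℝ} (hx : 121 ≤ x) (hx726 : x < 726) :
    ψ (11 / 6 * x) - θ (11 / 6 * x) ≤ 0.95 * √x + 3.7 * x ^ (1 / 3 : ℝ) := by
  have key {s c : ℝ} (hs : 0 ≤ s) (hc : 0 ≤ c) (hsx : s ^ 2 ≤ x) (hcx : c ^ 3 ≤ x) :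
      0.95 * s + 3.7 * c ≤ 0.95 * √x + 3.7 * x ^ (1 / 3 : ℝ) := by
    have hs_le : s ≤ √x := (Real.le_sqrt hs (by linarith)).mpr hsx
    have hc_le : c ≤ x ^ (1 / 3 : ℝ) := le_rpow_one_third hc hcx
    linarith
  rcases lt_or_ge x 280 with h280 | h280
  · calc ψ (11 / 6 * x) - θ (11 / 6 * x) ≤ (28 : ℕ) :=
          psi_sub_theta_le_of_prod_eq (m := 22) (N := 513) (A := 2^8*3^4*5^2*7^2*11*13*17*19)
            (by push_cast; linarith) (by norm_num) (by norm_num) (by decide) (by norm_num)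
      _ ≤ 0.95 * 11 + 3.7 * 4.9 := by norm_num
      _ ≤ _ := key (by norm_num) (by norm_num) (by linarith) (by linarith)
  rcases lt_or_ge x 523 with h523 | h523
  · calc ψ (11 / 6 * x) - θ (11 / 6 * x) ≤ (38 : ℕ) :=
          psi_sub_theta_le_of_prod_eq (m := 30) (N := 958)
            (A := 2^8*3^5*5^3*7^2*11*13*17*19*23*29)
            (by push_cast; linarith) (by norm_num) (by norm_num) (by decide) (by norm_num)
      _ ≤ 0.95 * 16.7 + 3.7 * 6.5 := by norm_num
      _ ≤ _ := key (by norm_num) (by norm_num) (by linarith) (by linarith)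
  · calc ψ (11 / 6 * x) - θ (11 / 6 * x) ≤ (42 : ℕ) :=
          psi_sub_theta_le_of_prod_eq (m := 36) (N := 1330)
            (A := 2^9*3^5*5^3*7^2*11*13*17*19*23*29*31)
            (by push_cast; linarith) (by norm_num) (by norm_num) (by decide) (by norm_num)
      _ ≤ 0.95 * 22.8 + 3.7 * 8 := by norm_num
      _ ≤ _ := key (by norm_num) (by norm_num) (by linarith) (by linarith)

end Chebyshev

theorem chebyshevPsi_eq_psi : chebyshevPsi = ψ := by
  funext t
  simp only [chebyshevPsi, Chebyshev.psi, ← Finset.Icc_add_one_left_eq_Ioc, zero_add]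

theorem chebyshevTheta_eq_theta : chebyshevTheta = θ := by
  funext t
  simp only [chebyshevTheta, Chebyshev.theta, ← Finset.Icc_add_one_left_eq_Ioc, zero_add]

theorem platt_trudgian_sub_rosser_schoenfeld_le {x : ℝ} (hx : 0 ≤ x) :
    (1 + 10 ^ (-(6:ℤ))) * √(11 / 6 * x) + 3 * (11 / 6 * x) ^ (1 / 3 : ℝ) - 0.998684 * √(x / 6)
      ≤ 0.95 * √x + 3.7 * x ^ (1 / 3 : ℝ) := by
  have hsqrt_upper : √(11 / 6 * x) ≤ 1.35401 * √x := by
    rw [Real.sqrt_mul (by norm_num)]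
    gcongr
    exact Real.sqrt_le_iff.mpr ⟨by norm_num, by norm_num⟩
  have hsqrt_lower : 0.4082 * √x ≤ √(x / 6) := by
    rw [div_eq_inv_mul, Real.sqrt_mul (by norm_num)]
    gcongr
    exact (Real.le_sqrt (by norm_num) (by norm_num)).mpr (by norm_num)
  have hcbrt : (11 / 6 * x) ^ (1 / 3 : ℝ) ≤ 1.224 * x ^ (1 / 3 : ℝ) := by
    rw [Real.mul_rpow (by norm_num) hx]
    gcongr
    exact rpow_one_third_le (by norm_num) (by norm_num) (by norm_num)
  have : 0 ≤ √x := Real.sqrt_nonneg x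
  have : 0 ≤ x ^ (1 / 3 : ℝ) := Real.rpow_nonneg hx _
  rw [show (10 : ℝ) ^ (-(6:ℤ)) = 1 / 1000000 by norm_num]
  linarith

theorem prime_power_diff_bound_general (x h : ℝ) (hx : 121 ≤ x) (hhx : h ≤ 5 / 6 * x)
    (hub : ∀ t : ℝ, 0 ≤ t →
      chebyshevPsi t - chebyshevTheta t ≤ (1 + 10 ^ (-(6:ℤ))) * Real.sqrt t + 3 * t ^ ((1:ℝ)/3))
    (hlb : ∀ t : ℝ, 121 ≤ t → 0.998684 * Real.sqrt t ≤ chebyshevPsi t - chebyshevTheta t) :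
    (chebyshevPsi (x + h) - chebyshevTheta (x + h))
        - (chebyshevPsi (x - h) - chebyshevTheta (x - h))
      ≤ 0.95 * Real.sqrt x + 3.7 * x ^ ((1:ℝ)/3) := by
  rw [chebyshevPsi_eq_psi, chebyshevTheta_eq_theta] at hub hlb ⊢
  have hup : ψ (x + h) - θ (x + h) ≤ ψ (11 / 6 * x) - θ (11 / 6 * x) :=
    psi_sub_theta_mono (by linarith)
  rcases le_or_gt 121 (x - h) with hlarge | hsmall
  · have : √(x / 6) ≤ √(x - h) := Real.sqrt_le_sqrt (by linarith)
    linarith [hub (11 / 6 * x) (by linarith), hlb (x - h) hlarge,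
      platt_trudgian_sub_rosser_schoenfeld_le (by linarith : 0 ≤ x)]
  · linarith [sub_nonneg.mpr (theta_le_psi (x - h)),
      psi_sub_theta_eleven_sixths_le hx (by linarith)]

theorem prime_power_diff_bound (x h : ℝ) (hx : 121 ≤ x) (hh : 0 < h) (hhx : h ≤ 5 / 6 * x)
    (hub : ∀ t : ℝ, 0 ≤ t →
      chebyshevPsi t - chebyshevTheta t ≤ (1 + 10 ^ (-(6:ℤ))) * Real.sqrt t + 3 * t ^ ((1:ℝ)/3))
    (hlb : ∀ t : ℝ, 121 ≤ t → 0.998684 * Real.sqrt t ≤ chebyshevPsi t - chebyshevTheta t) :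
    (chebyshevPsi (x + h) - chebyshevTheta (x + h))
        - (chebyshevPsi (x - h) - chebyshevTheta (x - h))
      ≤ 0.95 * Real.sqrt x + 3.7 * x ^ ((1:ℝ)/3) :=
  prime_power_diff_bound_general x h hx hhx hub hlb
end

section
/- Let χ be a Dirichlet character mod q induced by the primitive character χ* mod q_χ, and define B(χ,x) := Σ_{n ≤ x} (χ(n) - χ*(n))·Λ(n)·(x - n). Then for all x ≥ 1 and 0 < h ≤ x, |B(χ, x+h) - 2·B(χ,x) + B(χ, x-h)| ≤ ω(q)·h·log(2x), where ω(q) is the number of distinct prime divisors of q. -/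
/-!
Write `B(χ, y) = Σ_{n ≤ y} a(n) (y - n)₊` over the common range `n ≤ x + h`. The second difference
then has kernel `(u + h)₊ - 2 u₊ + (u - h)₊` with `u = x - n`, bounded by `h` because `u ↦ u₊` is
monotone and 1-Lipschitz. As `χ` is induced by `χ'`, the coefficient `a(n) = (χ(n) - χ'(n)) Λ(n)`
vanishes for `n` coprime to `q` and satisfies `|a(n)| ≤ Λ(n)` otherwise. Such `n` with `Λ(n) ≠ 0`
are powers of a prime `p ∣ q`, and for each `p` the powers `p^k ≤ N` contribute at most `log N`:
they divide `p^⌊log_p N⌋`, whose divisors carry total von Mangoldt weight `log p^⌊log_p N⌋`.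
-/

/-- `B(χ,x) = Σ_{n ≤ x} (χ(n) - χ*(n)) Λ(n) (x - n)` where `χ*` induces `χ`. -/
noncomputable def Bfun {q q' : ℕ} (χ : DirichletCharacter ℂ q) (χ' : DirichletCharacter ℂ q')
    (x : ℝ) : ℂ :=
  ∑ n ∈ Finset.Icc 1 ⌊x⌋₊,
    (χ (n : ZMod q) - χ' (n : ZMod q')) * (ArithmeticFunction.vonMangoldt n : ℂ) * ((x : ℂ) - n)

open Finset ArithmeticFunction

lemma abs_second_diff_max_zero_le (u : ℝ) {h : ℝ} (hh : 0 ≤ h) :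
    |max (u + h) 0 - 2 * max u 0 + max (u - h) 0| ≤ h := by
  have hup := abs_max_sub_max_le_abs (u + h) u 0
  have hdown := abs_max_sub_max_le_abs u (u - h) 0
  rw [add_sub_cancel_left, abs_of_nonneg hh] at hup
  rw [sub_sub_cancel, abs_of_nonneg hh] at hdown
  have hmono₁ : max u 0 ≤ max (u + h) 0 := max_le_max_right 0 (by linarith)
  have hmono₂ : max (u - h) 0 ≤ max u 0 := max_le_max_right 0 (by linarith)
  rw [abs_le] at hup hdown ⊢
  constructor <;> linarith

noncomputable def rieszSum (a : ℕ → ℂ) (y : ℝ) : ℂ :=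
  ∑ n ∈ Icc 1 ⌊y⌋₊, a n * ((y : ℂ) - n)

lemma Bfun_eq_rieszSum {q q' : ℕ} (χ : DirichletCharacter ℂ q) (χ' : DirichletCharacter ℂ q') :
    Bfun χ χ' = rieszSum fun n => (χ n - χ' n) * (Λ n : ℂ) :=
  rfl

lemma rieszSum_eq_sum_Icc_max (a : ℕ → ℂ) {y : ℝ} {N : ℕ} (hN : ⌊y⌋₊ ≤ N) :
    rieszSum a y = ∑ n ∈ Icc 1 N, a n * ((max (y - n) 0 : ℝ) : ℂ) := by
  rw [rieszSum, ← sum_subset (Icc_subset_Icc_right hN)]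
  · refine sum_congr rfl fun n hn => ?_
    rw [mem_Icc] at hn
    have hny : (n : ℝ) ≤ y := (Nat.le_floor_iff' (by omega)).mp hn.2
    rw [max_eq_left (by linarith)]
    push_cast
    rfl
  · intro n hn hn'
    rw [mem_Icc] at hn hn'
    have hyn : y < n := (Nat.floor_lt' (by omega)).mp (by omega)
    rw [max_eq_right (by linarith)]
    simp

lemma norm_rieszSum_second_diff_le (a : ℕ → ℂ) (x : ℝ) {h : ℝ} (hh : 0 ≤ h) :
    ‖rieszSum a (x + h) - 2 * rieszSum a x + rieszSum a (x - h)‖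
      ≤ h * ∑ n ∈ Icc 1 ⌊x + h⌋₊, ‖a n‖ := by
  set N := ⌊x + h⌋₊
  rw [rieszSum_eq_sum_Icc_max a (le_refl N),
    rieszSum_eq_sum_Icc_max a (Nat.floor_le_floor (by linarith) : ⌊x⌋₊ ≤ N),
    rieszSum_eq_sum_Icc_max a (Nat.floor_le_floor (by linarith) : ⌊x - h⌋₊ ≤ N),
    mul_sum, ← sum_sub_distrib, ← sum_add_distrib, mul_sum]
  refine (norm_sum_le _ _).trans (sum_le_sum fun n _ => ?_)
  have hkernel := abs_second_diff_max_zero_le (x - n) hh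
  rw [sub_add_eq_add_sub x (n : ℝ) h, sub_right_comm x (n : ℝ) h] at hkernel
  calc _ = ‖a n * ((max (x + h - n) 0 - 2 * max (x - n) 0 + max (x - h - n) 0 : ℝ) : ℂ)‖ := by
        push_cast; ring_nf
    _ ≤ h * ‖a n‖ := by
        rw [norm_mul, Complex.norm_real, Real.norm_eq_abs, mul_comm]
        gcongr

lemma DirichletCharacter.changeLevel_apply_natCast_of_coprime {R : Type*} [CommMonoidWithZero R]
    {q q' : ℕ} (hdvd : q' ∣ q) (χ' : DirichletCharacter R q') {n : ℕ} (hn : n.Coprime q) :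
    changeLevel hdvd χ' n = χ' n := by
  obtain ⟨u, hu⟩ := (ZMod.isUnit_iff_coprime n q).mpr hn
  rw [← hu, changeLevel_eq_cast_of_dvd χ' hdvd u, hu, ZMod.cast_natCast hdvd]

lemma norm_changeLevel_sub_mul_vonMangoldt_le {q q' : ℕ} (hdvd : q' ∣ q)
    (χ' : DirichletCharacter ℂ q') (n : ℕ) :
    ‖(DirichletCharacter.changeLevel hdvd χ' n - χ' n) * (Λ n : ℂ)‖
      ≤ if ¬ n.Coprime q then Λ n else 0 := by
  split_ifs with hn
  · simp [DirichletCharacter.changeLevel_apply_natCast_of_coprime hdvd χ' hn]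
  · have hzero : DirichletCharacter.changeLevel hdvd χ' n = 0 :=
      MulChar.map_nonunit _ fun hu => hn ((ZMod.isUnit_iff_coprime n q).mp hu)
    rw [hzero, zero_sub, norm_mul, norm_neg, Complex.norm_real,
      Real.norm_of_nonneg vonMangoldt_nonneg]
    exact mul_le_of_le_one_left vonMangoldt_nonneg (χ'.norm_le_one _)

lemma sum_filter_not_coprime_le_sum_primeFactors {q : ℕ} (hq : q ≠ 0) (s : Finset ℕ)
    {f : ℕ → ℝ} (hf : ∀ n, 0 ≤ f n) :
    ∑ n ∈ s with ¬ n.Coprime q, f n ≤ ∑ p ∈ q.primeFactors, ∑ n ∈ s with p ∣ n, f n := by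
  calc ∑ n ∈ s with ¬ n.Coprime q, f n
      ≤ ∑ n ∈ s with ¬ n.Coprime q, ∑ p ∈ q.primeFactors with p ∣ n, f n := by
        refine sum_le_sum fun n hn => ?_
        obtain ⟨p, hp, hpn, hpq⟩ := Nat.Prime.not_coprime_iff_dvd.mp (mem_filter.mp hn).2
        exact single_le_sum (f := fun _ => f n) (fun _ _ => hf n)
          (mem_filter.mpr ⟨Nat.mem_primeFactors.mpr ⟨hp, hpq, hq⟩, hpn⟩)
    _ ≤ ∑ n ∈ s, ∑ p ∈ q.primeFactors with p ∣ n, f n :=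
        sum_le_sum_of_subset_of_nonneg (filter_subset _ _)
          fun n _ _ => sum_nonneg fun _ _ => hf n
    _ = ∑ p ∈ q.primeFactors, ∑ n ∈ s with p ∣ n, f n := by
        simp only [sum_filter]
        exact sum_comm

lemma sum_Icc_filter_dvd_vonMangoldt_le_log {p : ℕ} (hp : p.Prime) (N : ℕ) :
    ∑ n ∈ Icc 1 N with p ∣ n, Λ n ≤ Real.log N := by
  rcases Nat.eq_zero_or_pos N with rfl | hN
  · simp
  set K := Nat.log p N
  have hsupport : ∀ n ∈ {n ∈ Icc 1 N | p ∣ n}, Λ n ≠ 0 → n ∈ (p ^ K).divisors := by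
    intro n hn hΛ
    obtain ⟨r, k, hr, hk, rfl⟩ := vonMangoldt_ne_zero_iff.mp hΛ
    rw [← Nat.prime_iff] at hr
    obtain ⟨hnN, hpn⟩ := mem_filter.mp hn
    have hpr : p = r := (Nat.prime_dvd_prime_iff_eq hp hr).mp (hp.dvd_of_dvd_pow hpn)
    subst hpr
    have hkK : k ≤ K := Nat.le_log_of_pow_le hp.one_lt (mem_Icc.mp hnN).2
    exact Nat.mem_divisors.mpr ⟨pow_dvd_pow p hkK, pow_ne_zero K hp.ne_zero⟩
  calc ∑ n ∈ Icc 1 N with p ∣ n, Λ n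
      ≤ ∑ d ∈ (p ^ K).divisors, Λ d := by
        rw [← sum_filter_ne_zero]
        exact sum_le_sum_of_subset_of_nonneg
          (fun n hn => hsupport n (mem_filter.mp hn).1 (mem_filter.mp hn).2)
          fun _ _ _ => vonMangoldt_nonneg
    _ = Real.log (p ^ K : ℕ) := vonMangoldt_sum
    _ ≤ Real.log N := Real.log_le_log (by exact_mod_cast pow_pos hp.pos K)
        (by exact_mod_cast Nat.pow_log_le_self p hN.ne')

theorem second_diff_B_bound_general (q q' : ℕ) [NeZero q] (hdvd : q' ∣ q)
    (χ' : DirichletCharacter ℂ q')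
    (χ : DirichletCharacter ℂ q) (hind : χ = DirichletCharacter.changeLevel hdvd χ')
    (x h : ℝ) (hx : 1 ≤ x) (hh : 0 < h) (hhx : h ≤ x) :
    ‖Bfun χ χ' (x + h) - 2 * Bfun χ χ' x + Bfun χ χ' (x - h)‖
      ≤ q.primeFactors.card * h * Real.log (2 * x) := by
  subst hind
  rw [Bfun_eq_rieszSum]
  set N := ⌊x + h⌋₊
  have hN_pos : (0 : ℝ) < N := by exact_mod_cast Nat.floor_pos.mpr (by linarith)
  have hN_le : (N : ℝ) ≤ 2 * x := (Nat.floor_le (by linarith)).trans (by linarith)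
  calc _ ≤ h * ∑ n ∈ Icc 1 N,
        ‖(DirichletCharacter.changeLevel hdvd χ' n - χ' n) * (Λ n : ℂ)‖ :=
        norm_rieszSum_second_diff_le _ x hh.le
    _ ≤ h * ∑ n ∈ Icc 1 N with ¬ n.Coprime q, Λ n := by
        rw [sum_filter]
        gcongr with n
        exact norm_changeLevel_sub_mul_vonMangoldt_le hdvd χ' n
    _ ≤ h * ∑ _p ∈ q.primeFactors, Real.log N := by
        gcongr
        exact (sum_filter_not_coprime_le_sum_primeFactors (NeZero.ne q) _
          fun _ => vonMangoldt_nonneg).trans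
          (sum_le_sum fun p hp => sum_Icc_filter_dvd_vonMangoldt_le_log
            (Nat.prime_of_mem_primeFactors hp) N)
    _ ≤ q.primeFactors.card * h * Real.log (2 * x) := by
        rw [sum_const, nsmul_eq_mul, mul_left_comm, ← mul_assoc]
        gcongr

theorem second_diff_B_bound (q q' : ℕ) [NeZero q] [NeZero q'] (hdvd : q' ∣ q)
    (χ' : DirichletCharacter ℂ q') (hχ' : χ'.IsPrimitive)
    (χ : DirichletCharacter ℂ q) (hind : χ = DirichletCharacter.changeLevel hdvd χ')
    (x h : ℝ) (hx : 1 ≤ x) (hh : 0 < h) (hhx : h ≤ x) :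
    ‖Bfun χ χ' (x + h) - 2 * Bfun χ χ' x + Bfun χ χ' (x - h)‖
      ≤ q.primeFactors.card * h * Real.log (2 * x) :=
  second_diff_B_bound_general q q' hdvd χ' χ hind x h hx hh hhx
end
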